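/- arXiv:math/0612407 — 12 statements merged into one kernel-verified Lean document; each statement's English description precedes it below -/
import Mathlib

section
/- The function V₁(x,y,z) = (x+1)(y+1)(z+1)(a+x+y+z)/(xyz) is a first integral of F on O⁺, that is, V₁(F(x,y,z)) = V₁(x,y,z) for all (x,y,z) ∈ O⁺. -/
/-- `V₁(x,y,z) = (x+1)(y+1)(z+1)(a+x+y+z)/(xyz)` is a first integral of the
Lyness map `F(x,y,z) = (y, z, (a+y+z)/x)` on the positive octant. -/
theorem lyness_V1_first_integral (a : ℝ) (ha : 0 < a) (x y z : ℝ)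
    (hx : 0 < x) (hy : 0 < y) (hz : 0 < z) :
    let V1 : ℝ → ℝ → ℝ → ℝ := fun x y z =>
      (x + 1) * (y + 1) * (z + 1) * (a + x + y + z) / (x * y * z)
    V1 y z ((a + y + z) / x) = V1 x y z := by
  intro V1
  simp only [V1]
  have hayz : 0 < a + y + z := by linarith
  field_simp
  ring
end

section
/- The function V₂(x,y,z) = (1+y+z)(1+x+y)(a+x+y+z+xz)/(xyz) is a first integral of F on O⁺, that is, V₂(F(x,y,z)) = V₂(x,y,z) for all (x,y,z) ∈ O⁺. -/
/-- `V₂(x,y,z) = (1+y+z)(1+x+y)(a+x+y+z+xz)/(xyz)` is a first integral of the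
Lyness map `F(x,y,z) = (y, z, (a+y+z)/x)` on the positive octant. -/
theorem lyness_V2_first_integral (a : ℝ) (ha : 0 < a) (x y z : ℝ)
    (hx : 0 < x) (hy : 0 < y) (hz : 0 < z) :
    let V2 : ℝ → ℝ → ℝ → ℝ := fun x y z =>
      (1 + y + z) * (1 + x + y) * (a + x + y + z + x * z) / (x * y * z)
    V2 y z ((a + y + z) / x) = V2 x y z := by
  intro V2
  have hw : (0:ℝ) < a + y + z := by linarith
  simp only [V2]
  field_simp
  ring
end

section
/- For the polynomial G(x,y,z) = -y³ - (x+z+a+1)y² - (x+z+a)y + xz(x+1)(z+1) and the map F(x,y,z) = (y, z, (a+y+z)/x), the identity G(F(x,y,z)) = -((a+y+z)/x²)·G(x,y,z) holds for all (x,y,z) with x ≠ 0. In particular, the zero set of G in O⁺ is invariant under F, and F maps {G > 0} ∩ O⁺ into {G < 0} ∩ O⁺ and vice versa. -/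
/-- The key identity `G(F(x,y,z)) = -((a+y+z)/x²)·G(x,y,z)`; consequently the
zero set of `G` in the positive octant is invariant under `F`, and `F` swaps
the regions `{G > 0}` and `{G < 0}` in the positive octant. -/
theorem lyness_G_identity (a : ℝ) (ha : 0 < a) :
    let G : ℝ → ℝ → ℝ → ℝ := fun x y z =>
      -y ^ 3 - (x + z + a + 1) * y ^ 2 - (x + z + a) * y + x * z * (x + 1) * (z + 1)
    (∀ x y z : ℝ, x ≠ 0 →
        G y z ((a + y + z) / x) = -((a + y + z) / x ^ 2) * G x y z) ∧
    (∀ x y z : ℝ, 0 < x → 0 < y → 0 < z →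
        (G x y z = 0 → G y z ((a + y + z) / x) = 0) ∧
        (0 < G x y z → G y z ((a + y + z) / x) < 0) ∧
        (G x y z < 0 → 0 < G y z ((a + y + z) / x))) := by
  intro G
  have key : ∀ x y z : ℝ, x ≠ 0 →
      G y z ((a + y + z) / x) = -((a + y + z) / x ^ 2) * G x y z := by
    intro x y z hx
    simp only [G]
    field_simp
    ring
  refine ⟨key, fun x y z hx hy hz => ?_⟩
  have hc : 0 < (a + y + z) / x ^ 2 := div_pos (by linarith) (by positivity)
  rw [key x y z hx.ne']
  refine ⟨fun h => by rw [h]; ring, fun h => ?_, fun h => ?_⟩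
  · nlinarith [mul_pos hc h]
  · nlinarith [mul_pos hc (neg_pos.mpr h)]
end

section
/- For every x > 1, the point p = (x, (x+a)/(x-1), x) satisfies F(F(p)) = p; that is, the curve L = {(x, (x+a)/(x-1), x) : x > 1} consists of points of period at most 2 for F. Moreover, F(p) = p if and only if x = 1 + √(1+a). -/
/-- Every point `p = (x, (x+a)/(x-1), x)` with `x > 1` satisfies `F(F(p)) = p`,
so the curve `L` consists of points of period at most two; moreover `p` is a
fixed point of `F` iff `x = 1 + √(1+a)`. -/
theorem lyness_two_periodic_curve (a : ℝ) (ha : 0 < a) :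
    let F : ℝ × ℝ × ℝ → ℝ × ℝ × ℝ := fun p => (p.2.1, p.2.2, (a + p.2.1 + p.2.2) / p.1)
    ∀ x : ℝ, 1 < x →
      F (F (x, (x + a) / (x - 1), x)) = (x, (x + a) / (x - 1), x) ∧
      (F (x, (x + a) / (x - 1), x) = (x, (x + a) / (x - 1), x) ↔
        x = 1 + Real.sqrt (1 + a)) := by
  intro F x hx
  have hx0 : x ≠ 0 := by linarith
  have hx1 : x - 1 ≠ 0 := by intro h; apply hx0; linarith [sub_eq_zero.mp h]
  have hx1' : (0:ℝ) < x - 1 := by linarith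
  have hy0 : (0:ℝ) < (x + a) / (x - 1) := by positivity
  have hy : (x + a) / (x - 1) ≠ 0 := ne_of_gt hy0
  have key1 : (a + (x + a) / (x - 1) + x) / x = (x + a) / (x - 1) := by
    field_simp
    ring
  have key2 : (a + x + (x + a) / (x - 1)) / ((x + a) / (x - 1)) = x := by
    rw [div_eq_iff hy]
    field_simp
    ring
  simp only [F, Prod.mk.injEq]
  refine ⟨⟨trivial, key1, by rw [key1]; exact key2⟩, ?_⟩
  constructor
  · rintro ⟨h1, -, -⟩
    -- h1 : (x+a)/(x-1) = x
    have hsq : (x - 1) ^ 2 = 1 + a := by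
      have := (div_eq_iff hx1).mp h1
      nlinarith
    have : Real.sqrt (1 + a) = x - 1 := by
      rw [← hsq, Real.sqrt_sq (by linarith)]
    linarith
  · intro h
    have hsq : (x - 1) ^ 2 = 1 + a := by
      rw [h]
      simp [Real.sq_sqrt (by linarith : (0:ℝ) ≤ 1 + a)]
    have h1 : (x + a) / (x - 1) = x := by
      rw [div_eq_iff hx1]; nlinarith
    exact ⟨h1, h1.symm, by rw [key1]; exact h1⟩
end

section
/- The function V₁ restricted to O⁺ has a unique critical point, namely (x_c, x_c, x_c) with x_c = 1+√(1+a). Equivalently, the only solution in O⁺ of the system x² = a+y+z, y² = a+x+z, z² = a+x+y is x = y = z = x_c. -/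
/-!
Since `∂V₁/∂x = (y+1)(z+1)(x² - a - y - z) / (x²yz)`, and symmetrically for `y` and `z`, the
critical points of `V₁` in `O⁺` are the positive solutions of the system. Adding `x`, `y`, `z`
respectively turns its equations into `t² + t = a + x + y + z` for `t = x, y, z`; as `t ↦ t² + t`
is injective on `t ≥ 0`, this forces `x = y = z`, and then `x² = a + 2x` has `x_c` as its only
positive root, the other root `1 - √(1+a)` being `≤ 0` because `a ≥ 0`.
-/

open ContinuousLinearMap

noncomputable def lynessV1 (a : ℝ) (p : ℝ × ℝ × ℝ) : ℝ :=
  (p.1 + 1) * (p.2.1 + 1) * (p.2.2 + 1) * (a + p.1 + p.2.1 + p.2.2) / (p.1 * p.2.1 * p.2.2)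

noncomputable def lynessV1Partial (a x y z : ℝ) : ℝ :=
  (y + 1) * (z + 1) * (x ^ 2 - (a + y + z)) / (x ^ 2 * y * z)

theorem triple_coord_form_eq_zero_iff {c₁ c₂ c₃ : ℝ} :
    c₁ • fst ℝ ℝ (ℝ × ℝ) + c₂ • (fst ℝ ℝ ℝ ∘L snd ℝ ℝ (ℝ × ℝ)) +
        c₃ • (snd ℝ ℝ ℝ ∘L snd ℝ ℝ (ℝ × ℝ)) = 0 ↔ c₁ = 0 ∧ c₂ = 0 ∧ c₃ = 0 := by
  refine ⟨fun h => ⟨?_, ?_, ?_⟩, fun ⟨h₁, h₂, h₃⟩ => by simp [h₁, h₂, h₃]⟩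
  · simpa using congr($h (1, 0, 0))
  · simpa using congr($h (0, 1, 0))
  · simpa using congr($h (0, 0, 1))

theorem hasFDerivAt_lynessV1 (a : ℝ) {x y z : ℝ} (hx : x ≠ 0) (hy : y ≠ 0) (hz : z ≠ 0) :
    HasFDerivAt (lynessV1 a)
      (lynessV1Partial a x y z • fst ℝ ℝ (ℝ × ℝ) +
        lynessV1Partial a y x z • (fst ℝ ℝ ℝ ∘L snd ℝ ℝ (ℝ × ℝ)) +
        lynessV1Partial a z x y • (snd ℝ ℝ ℝ ∘L snd ℝ ℝ (ℝ × ℝ))) (x, y, z) := by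
  have h₁ : HasFDerivAt (fun p : ℝ × ℝ × ℝ => p.1) (fst ℝ ℝ (ℝ × ℝ)) (x, y, z) :=
    hasFDerivAt_fst
  have h₂ : HasFDerivAt (fun p : ℝ × ℝ × ℝ => p.2.1)
      (fst ℝ ℝ ℝ ∘L snd ℝ ℝ (ℝ × ℝ)) (x, y, z) :=
    hasFDerivAt_fst.comp _ hasFDerivAt_snd
  have h₃ : HasFDerivAt (fun p : ℝ × ℝ × ℝ => p.2.2)
      (snd ℝ ℝ ℝ ∘L snd ℝ ℝ (ℝ × ℝ)) (x, y, z) :=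
    hasFDerivAt_snd.comp _ hasFDerivAt_snd
  have hnum := (((h₁.add_const 1).mul (h₂.add_const 1)).mul (h₃.add_const 1)).mul
    (((h₁.const_add a).add h₂).add h₃)
  have hden := (hasDerivAt_inv (mul_ne_zero (mul_ne_zero hx hy) hz)).comp_hasFDerivAt (x, y, z)
    ((h₁.mul h₂).mul h₃)
  have hV : lynessV1 a = fun p => (p.1 + 1) * (p.2.1 + 1) * (p.2.2 + 1) *
      (a + p.1 + p.2.1 + p.2.2) * (p.1 * p.2.1 * p.2.2)⁻¹ :=
    funext fun p => div_eq_mul_inv _ _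
  rw [hV]
  refine (hnum.mul hden).congr_fderiv (ContinuousLinearMap.ext fun w => ?_)
  simp only [add_apply, smul_apply, comp_apply, coe_fst', coe_snd', smul_eq_mul,
    Pi.mul_apply, Pi.add_apply, Function.comp_apply, lynessV1Partial]
  field_simp
  ring

theorem lynessV1Partial_eq_zero_iff {a x y z : ℝ} (hx : x ≠ 0) (hy : 0 < y) (hz : 0 < z) :
    lynessV1Partial a x y z = 0 ↔ x ^ 2 = a + y + z := by
  have hfactor : (y + 1) * (z + 1) ≠ 0 := by positivity
  have hden : x ^ 2 * y * z ≠ 0 := by positivity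
  rw [lynessV1Partial, div_eq_zero_iff, mul_eq_zero, or_iff_right hfactor, sub_eq_zero,
    or_iff_left hden]

theorem fderiv_lynessV1_eq_zero_iff {a x y z : ℝ} (hx : 0 < x) (hy : 0 < y) (hz : 0 < z) :
    fderiv ℝ (lynessV1 a) (x, y, z) = 0 ↔
      x ^ 2 = a + y + z ∧ y ^ 2 = a + x + z ∧ z ^ 2 = a + x + y := by
  rw [(hasFDerivAt_lynessV1 a hx.ne' hy.ne' hz.ne').fderiv, triple_coord_form_eq_zero_iff,
    lynessV1Partial_eq_zero_iff hx.ne' hy hz, lynessV1Partial_eq_zero_iff hy.ne' hx hz,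
    lynessV1Partial_eq_zero_iff hz.ne' hx hy]

theorem eq_of_sq_add_self_eq {x y : ℝ} (hx : 0 ≤ x) (hy : 0 ≤ y)
    (h : x ^ 2 + x = y ^ 2 + y) : x = y := by
  nlinarith

theorem sq_eq_add_two_mul_iff {a x : ℝ} (ha : 0 ≤ a) (hx : 0 < x) :
    x ^ 2 = a + 2 * x ↔ x = 1 + √(1 + a) := by
  have hsqrt : √(1 + a) ^ 2 = 1 + a := Real.sq_sqrt (by linarith)
  constructor
  · intro h
    have hsq : (x - 1) ^ 2 = 1 + a := by linear_combination h
    have hge : 0 ≤ x - 1 := by nlinarith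
    rw [← hsq, Real.sqrt_sq hge]
    ring
  · rintro rfl
    linear_combination hsqrt

theorem lyness_critical_system_iff {a x y z : ℝ} (ha : 0 ≤ a) (hx : 0 < x) (hy : 0 < y)
    (hz : 0 < z) :
    (x ^ 2 = a + y + z ∧ y ^ 2 = a + x + z ∧ z ^ 2 = a + x + y) ↔
      (x = 1 + √(1 + a) ∧ y = 1 + √(1 + a) ∧ z = 1 + √(1 + a)) := by
  constructor
  · rintro ⟨h₁, h₂, h₃⟩
    obtain rfl : x = y := eq_of_sq_add_self_eq hx.le hy.le (by linarith)
    obtain rfl : x = z := eq_of_sq_add_self_eq hx.le hz.le (by linarith)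
    have hxc := (sq_eq_add_two_mul_iff ha hx).1 (by linarith)
    exact ⟨hxc, hxc, hxc⟩
  · rintro ⟨rfl, rfl, rfl⟩
    have hxc := (sq_eq_add_two_mul_iff ha hx).2 rfl
    exact ⟨by linarith, by linarith, by linarith⟩

/-- `V₁` has a unique critical point in the positive octant, namely
`(x_c, x_c, x_c)` with `x_c = 1 + √(1+a)`; equivalently, the only positive
solution of `x² = a+y+z`, `y² = a+x+z`, `z² = a+x+y` is `x = y = z = x_c`. -/
theorem lyness_V1_unique_critical_point (a : ℝ) (ha : 0 < a) :
    let V1 : ℝ × ℝ × ℝ → ℝ := fun p =>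
      (p.1 + 1) * (p.2.1 + 1) * (p.2.2 + 1) * (a + p.1 + p.2.1 + p.2.2) /
        (p.1 * p.2.1 * p.2.2)
    let xc : ℝ := 1 + Real.sqrt (1 + a)
    (∀ p : ℝ × ℝ × ℝ, 0 < p.1 → 0 < p.2.1 → 0 < p.2.2 →
      (fderiv ℝ V1 p = 0 ↔ p = (xc, xc, xc))) ∧
    (∀ x y z : ℝ, 0 < x → 0 < y → 0 < z →
      ((x ^ 2 = a + y + z ∧ y ^ 2 = a + x + z ∧ z ^ 2 = a + x + y) ↔
        (x = xc ∧ y = xc ∧ z = xc))) := by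
  refine ⟨?_, fun x y z hx hy hz => lyness_critical_system_iff ha.le hx hy hz⟩
  rintro ⟨x, y, z⟩ hx hy hz
  change fderiv ℝ (lynessV1 a) (x, y, z) = 0 ↔ _
  rw [fderiv_lynessV1_eq_zero_iff hx hy hz, lyness_critical_system_iff ha.le hx hy hz,
    Prod.mk.injEq, Prod.mk.injEq]
end

section
/- V₁(x_c, x_c, x_c) = (2+√(1+a))³(a+3+3√(1+a))/(1+√(1+a))³, and V₁(x,y,z) ≥ V₁(x_c,x_c,x_c) for all (x,y,z) ∈ O⁺; i.e. the fixed point is a global minimum of V₁ on O⁺. -/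
private lemma amgm3 {x y z : ℝ} (hx : 0 ≤ x) (hy : 0 ≤ y) (hz : 0 ≤ z) :
    3 * (x * y * z) ^ (1/3 : ℝ) ≤ x + y + z := by
  have h := Real.geom_mean_le_arith_mean3_weighted (by norm_num : (0:ℝ) ≤ 1/3)
    (by norm_num : (0:ℝ) ≤ 1/3) (by norm_num : (0:ℝ) ≤ 1/3) hx hy hz (by norm_num)
  have e : (x * y * z) ^ (1/3 : ℝ) = x ^ (1/3:ℝ) * y ^ (1/3:ℝ) * z ^ (1/3:ℝ) := by
    rw [Real.mul_rpow (mul_nonneg hx hy) hz, Real.mul_rpow hx hy]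
  rw [e]; linarith

private lemma keyineq {s t : ℝ} (hs : 1 < s) (ht : 0 < t) :
    (2 + s)^4 * t^3 ≤ (t + 1)^3 * ((s^2 - 1) + 3*t) * (1 + s)^2 := by
  nlinarith [mul_nonneg (sq_nonneg (t - 1 - s)) (by nlinarith : (0:ℝ) ≤ s^2 - 1),
    mul_nonneg (mul_nonneg (sq_nonneg (t - 1 - s)) ht.le)
      (by nlinarith : (0:ℝ) ≤ 3*s^2 + 2*s - 2),
    mul_nonneg (mul_nonneg (sq_nonneg (t - 1 - s)) (sq_nonneg t)) (sq_nonneg (1 + s))]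

/-- The value of `V₁` at the fixed point is
`(2+√(1+a))³(a+3+3√(1+a))/(1+√(1+a))³`, and this value is a global minimum of
`V₁` on the positive octant. -/
theorem lyness_V1_global_min (a : ℝ) (ha : 0 < a) :
    let V1 : ℝ → ℝ → ℝ → ℝ := fun x y z =>
      (x + 1) * (y + 1) * (z + 1) * (a + x + y + z) / (x * y * z)
    let xc : ℝ := 1 + Real.sqrt (1 + a)
    V1 xc xc xc =
      (2 + Real.sqrt (1 + a)) ^ 3 * (a + 3 + 3 * Real.sqrt (1 + a)) /
        (1 + Real.sqrt (1 + a)) ^ 3 ∧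
    ∀ x y z : ℝ, 0 < x → 0 < y → 0 < z → V1 xc xc xc ≤ V1 x y z := by
  intro V1 xc
  set s : ℝ := Real.sqrt (1 + a) with hsdef
  have hs2 : s ^ 2 = 1 + a := Real.sq_sqrt (by linarith)
  have hs0 : 0 ≤ s := Real.sqrt_nonneg _
  have hs1 : 1 < s := by nlinarith
  have hxc : xc = 1 + s := rfl
  have h1s : (0:ℝ) < 1 + s := by linarith
  have hval : V1 xc xc xc = (2 + s)^4 / (1 + s)^2 := by
    show ((1+s) + 1) * ((1+s) + 1) * ((1+s) + 1) * (a + (1+s) + (1+s) + (1+s)) /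
        ((1+s) * (1+s) * (1+s)) = (2 + s)^4 / (1 + s)^2
    rw [div_eq_div_iff (by positivity) (by positivity)]
    linear_combination (-(2+s)^3 * (1+s)^2) * hs2
  constructor
  · rw [hval, div_eq_div_iff (by positivity) (by positivity)]
    linear_combination ((2+s)^3 * (1+s)^2) * hs2
  · intro x y z hx hy hz
    have hxyz : (0:ℝ) < x * y * z := by positivity
    set t : ℝ := (x * y * z) ^ (1/3 : ℝ) with htd
    have ht : 0 < t := Real.rpow_pos_of_pos hxyz _
    have ht3 : t ^ 3 = x * y * z := by
      rw [htd, ← Real.rpow_natCast ((x*y*z) ^ (1/3:ℝ)) 3, ← Real.rpow_mul hxyz.le]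
      norm_num
    have h1 : 3 * t ≤ x + y + z := amgm3 hx.le hy.le hz.le
    have h2 : 3 * t ^ 2 ≤ x*y + y*z + z*x := by
      have h := amgm3 (mul_nonneg hx.le hy.le) (mul_nonneg hy.le hz.le)
        (mul_nonneg hz.le hx.le)
      have e : ((x*y) * (y*z) * (z*x)) ^ (1/3 : ℝ) = t ^ 2 := by
        rw [show (x*y) * (y*z) * (z*x) = (x*y*z)^2 by ring,
          ← Real.rpow_natCast (x*y*z) 2, ← Real.rpow_mul hxyz.le, htd,
          ← Real.rpow_natCast ((x*y*z) ^ (1/3:ℝ)) 2, ← Real.rpow_mul hxyz.le]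
        norm_num
      rw [e] at h; linarith
    have h3 : (t + 1)^3 ≤ (x+1) * (y+1) * (z+1) := by nlinarith [ht3, h1, h2]
    have hkey := keyineq hs1 ht
    have hkey' : (2 + s)^4 * (x * y * z) ≤
        (x+1) * (y+1) * (z+1) * (a + x + y + z) * (1 + s)^2 := by
      calc (2 + s)^4 * (x * y * z) = (2 + s)^4 * t^3 := by rw [ht3]
        _ ≤ (t + 1)^3 * ((s^2 - 1) + 3*t) * (1 + s)^2 := hkey
        _ = (t + 1)^3 * (a + 3*t) * (1 + s)^2 := by
            rw [show s^2 - 1 = a by linarith]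
        _ ≤ (x+1) * (y+1) * (z+1) * (a + x + y + z) * (1 + s)^2 := by
            apply mul_le_mul_of_nonneg_right _ (by positivity)
            exact mul_le_mul h3 (by linarith) (by linarith) (by positivity)
    rw [hval]
    show (2 + s)^4 / (1 + s)^2 ≤ (x+1) * (y+1) * (z+1) * (a + x + y + z) / (x * y * z)
    rw [div_le_div_iff₀ (by positivity) hxyz]
    linarith [hkey']
end

section
/- Let I = (a,b) be an open real interval with a < b, let p ≥ 2 be a prime with p > 3/(b-a), and let k ≥ 1 be a natural number. Then there exists an integer q coprime with kp such that a < q/(kp) < b. -/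
/-!
Work with the numerators `q` over the denominator `N = kp`: the target interval is `(Na, Nb)`,
of length `k · p(b - a) > 3k`, so it contains two consecutive terms `kt + 1`, `k(t + 1) + 1` of
the progression `1 mod k`. Both are coprime to `k`, and since they differ by `k` the prime `p`
cannot divide both (it would then divide `k` as well as `kt + 1`).
-/

open Set

theorem isCoprime_mul_prime_of_consecutive {R : Type*} [CommRing R] [IsBezout R] [IsDomain R]
    {p : R} (hp : Prime p) (k t : R) :
    IsCoprime (k * t + 1) (k * p) ∨ IsCoprime (k * (t + 1) + 1) (k * p) := by
  have coprime_k (s : R) : IsCoprime (k * s + 1) k := ⟨1, -s, by ring⟩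
  have coprime_kp (s : R) (hs : ¬p ∣ k * s + 1) : IsCoprime (k * s + 1) (k * p) :=
    (coprime_k s).mul_right (hp.coprime_iff_not_dvd.mpr hs).symm
  by_cases ht : p ∣ k * t + 1
  · refine .inr (coprime_kp _ fun ht' => hp.not_isUnit ?_)
    have hpk : p ∣ k := by
      simpa only [show k * (t + 1) + 1 - (k * t + 1) = k by ring] using dvd_sub ht' ht
    exact (coprime_k t).isUnit_of_dvd' ht hpk
  · exact .inl (coprime_kp t ht)

theorem exists_int_consecutive_mem_Ioo {K : Type*} [Field K] [LinearOrder K]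
    [IsStrictOrderedRing K] [FloorRing K] {k : K} (hk : 0 < k) (c : K) {x y : K}
    (hxy : x + 2 * k < y) : ∃ t : ℤ, x < k * t + c ∧ k * (t + 1) + c < y := by
  refine ⟨⌊(x - c) / k⌋ + 1, ?_, ?_⟩
  · have := (div_lt_iff₀' hk).mp (Int.lt_floor_add_one ((x - c) / k))
    push_cast
    linarith
  · have := (le_div_iff₀' hk).mp (Int.floor_le ((x - c) / k))
    push_cast
    linarith

theorem exists_isCoprime_mul_prime_mem_Ioo {p : ℤ} (hp : Prime p) {k : ℤ} (hk : 0 < k)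
    {x y : ℝ} (hxy : x + 2 * k < y) : ∃ q : ℤ, IsCoprime q (k * p) ∧ (q : ℝ) ∈ Ioo x y := by
  obtain ⟨t, hxt, hty⟩ := exists_int_consecutive_mem_Ioo (K := ℝ) (by exact_mod_cast hk) 1 hxy
  have hk' : (0 : ℝ) ≤ k := by exact_mod_cast hk.le
  rcases isCoprime_mul_prime_of_consecutive hp k t with h | h
  · exact ⟨_, h, by push_cast; constructor <;> linarith⟩
  · exact ⟨_, h, by push_cast; constructor <;> linarith⟩

/-- If `p` is a prime with `p > 3/(b-a)` and `k ≥ 1`, then there is an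
irreducible fraction `q/(kp)` in the interval `(a,b)`. -/
theorem irreducible_fraction_denominator_kp (a b : ℝ) (hab : a < b)
    (p : ℕ) (hp : p.Prime) (hpbig : (p : ℝ) > 3 / (b - a))
    (k : ℕ) (hk : 1 ≤ k) :
    ∃ q : ℤ, Int.gcd q ((k : ℤ) * (p : ℤ)) = 1 ∧
      a < (q : ℝ) / ((k : ℝ) * (p : ℝ)) ∧ (q : ℝ) / ((k : ℝ) * (p : ℝ)) < b := by
  have hk0 : (0 : ℝ) < k := by exact_mod_cast hk
  have hN : (0 : ℝ) < k * p := mul_pos hk0 (by exact_mod_cast hp.pos)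
  have hp3 : 3 < (p : ℝ) * (b - a) := (div_lt_iff₀ (sub_pos.mpr hab)).mp hpbig
  have hgap : k * p * a + 2 * ((k : ℤ) : ℝ) < k * p * b := by
    push_cast
    nlinarith
  obtain ⟨q, hcop, hlo, hhi⟩ :=
    exists_isCoprime_mul_prime_mem_Ioo (Nat.prime_iff_prime_int.mp hp) (by omega) hgap
  refine ⟨q, Int.isCoprime_iff_gcd_eq_one.mp hcop, ?_, ?_⟩
  · rw [lt_div_iff₀ hN]
    linarith
  · rw [div_lt_iff₀ hN]
    linarith
end

section
/- Let I = (a,b) with a < b, let p be a prime and s ≥ 1 a natural number with p^s > 4/(b-a). Then for every natural number k ≥ 1 there exists an integer q coprime with k·p^s such that a < q/(k·p^s) < b. -/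
/-- If `p` is a prime and `s ≥ 1` with `p^s > 4/(b-a)`, then for every `k ≥ 1`
there is an irreducible fraction `q/(k·p^s)` in the interval `(a,b)`. -/
theorem irreducible_fraction_denominator_kps (a b : ℝ) (hab : a < b)
    (p : ℕ) (hp : p.Prime) (s : ℕ) (hs : 1 ≤ s)
    (hpbig : ((p : ℝ)) ^ s > 4 / (b - a))
    (k : ℕ) (hk : 1 ≤ k) :
    ∃ q : ℤ, Int.gcd q ((k : ℤ) * (p : ℤ) ^ s) = 1 ∧
      a < (q : ℝ) / ((k : ℝ) * (p : ℝ) ^ s) ∧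
        (q : ℝ) / ((k : ℝ) * (p : ℝ) ^ s) < b := by
  have hk0 : (1:ℝ) ≤ (k:ℝ) := by exact_mod_cast hk
  have hpp : (0:ℝ) < (p:ℝ) := by exact_mod_cast hp.pos
  have hp0 : (0:ℝ) < (p:ℝ) ^ s := by positivity
  have hN : (0:ℝ) < (k:ℝ) * (p:ℝ) ^ s := by positivity
  set N : ℝ := (k:ℝ) * (p:ℝ) ^ s with hNdef
  have hba : (0:ℝ) < b - a := sub_pos.mpr hab
  have hgap : 4 * (k:ℝ) < (b - a) * N := by
    have h4 : (4:ℝ) < (p:ℝ)^s * (b - a) := (div_lt_iff₀ hba).mp hpbig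
    have : 4 * (k:ℝ) < (k:ℝ) * ((p:ℝ)^s * (b-a)) := by nlinarith
    nlinarith [this]
  set t : ℤ := ⌊a * N / (k:ℝ)⌋ + 1 with htdef
  have hkR : (0:ℝ) < (k:ℝ) := by linarith
  have hlow : a * N < (k:ℝ) * t := by
    have h1 : a * N / (k:ℝ) < (t:ℝ) := by
      have := Int.lt_floor_add_one (a * N / (k:ℝ))
      push_cast [htdef]
      push_cast at this
      linarith
    calc a * N = (a * N / (k:ℝ)) * k := by field_simp
    _ < (t:ℝ) * k := by exact mul_lt_mul_of_pos_right h1 hkR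
    _ = (k:ℝ) * t := by ring
  have hhigh : (k:ℝ) * t ≤ a * N + (k:ℝ) := by
    have h1 : (t:ℝ) ≤ a * N / (k:ℝ) + 1 := by
      have := Int.floor_le (a * N / (k:ℝ))
      push_cast [htdef]
      linarith
    have h2 : (t:ℝ) * k ≤ (a * N / (k:ℝ) + 1) * k := mul_le_mul_of_nonneg_right h1 (le_of_lt hkR)
    have h3 : (a * N / (k:ℝ) + 1) * k = a * N + k := by field_simp
    linarith [h2, h3]
  -- the two candidate numerators
  have key : ∀ q : ℤ, IsCoprime q (k:ℤ) → ¬ (p:ℤ) ∣ q →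
      ((k:ℝ) * t ≤ (q:ℝ)) → ((q:ℝ) ≤ (k:ℝ) * t + (k:ℝ) + 1) →
      Int.gcd q ((k : ℤ) * (p : ℤ) ^ s) = 1 ∧
      a < (q : ℝ) / N ∧ (q : ℝ) / N < b := by
    intro q hck hnd hlo hhi
    have hprime : Prime (p:ℤ) := Int.prime_iff_natAbs_prime.mpr (by simpa using hp)
    have hcp : IsCoprime q ((p:ℤ)) :=
      ((hprime.irreducible.coprime_iff_not_dvd).mpr hnd).symm
    have hco : IsCoprime q ((k:ℤ) * (p:ℤ)^s) := hck.mul_right (hcp.pow_right)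
    refine ⟨Int.isCoprime_iff_gcd_eq_one.mp hco, ?_, ?_⟩
    · rw [lt_div_iff₀ hN]
      linarith
    · rw [div_lt_iff₀ hN]
      have : a * N + 3 * (k:ℝ) < b * N := by nlinarith [hgap]
      linarith
  by_cases hdvd : (p:ℤ) ∣ ((k:ℤ) * t + 1)
  · refine ⟨(k:ℤ) * (t + 1) + 1, key _ ⟨1, -(t+1), by ring⟩ ?_ (by push_cast; linarith) (by push_cast; linarith)⟩
    intro h
    have hdk : (p:ℤ) ∣ (k:ℤ) := by
      have := dvd_sub h hdvd
      have he : ((k:ℤ) * (t + 1) + 1) - ((k:ℤ) * t + 1) = (k:ℤ) := by ring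
      rwa [he] at this
    have h1 : (p:ℤ) ∣ 1 := by
      have := dvd_sub hdvd (Dvd.dvd.mul_right hdk t)
      simpa using this
    exact (Int.prime_iff_natAbs_prime.mpr (by simpa using hp)).not_dvd_one h1
  · exact ⟨(k:ℤ) * t + 1, key _ ⟨1, -t, by ring⟩ hdvd (by push_cast; linarith) (by push_cast; linarith)⟩
end

section
/- Fix an open interval (a,b) with a < b. Let p₁ = 2, p₂ = 3, …, p_m be all primes ≤ 3/(b-a) (i.e. all primes below the least prime exceeding max(3/(b-a), 2)), and for each i ≤ m let s_i be the least natural number with p_i^{s_i} > 4/(b-a). Then for every natural number r that is NOT of the form p₁^{t₁}···p_m^{t_m} with 0 ≤ t_i ≤ s_i − 1 for all i, there exists an integer q with gcd(q, r) = 1 and a < q/r < b. -/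
/-! Some prime `p` has `P = p ^ v_p(r)` with `P (b - a) > 2`: either `p > 3/(b-a)`, or
`v_p(r) ≥ s_p` and then `P > 4/(b-a)`. Writing `r = P m` with `p ∤ m`, the interval
`(r a, r b)` has length `> 2m`, so it contains two consecutive terms `1 + j m`, `1 + (j+1) m`
of a progression of difference `m`. Both are coprime to `m`, and they cannot both be divisible
by `p ∤ m`; the one that is not is coprime to `r`. -/

lemma exists_add_mul_mem_Ioo_of_add_two_mul_lt (c : ℝ) {d x y : ℝ} (hd : 0 < d)
    (h : x + 2 * d < y) : ∃ j : ℤ, x < c + j * d ∧ c + (j + 1) * d < y := by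
  set t := (x - c) / d
  have htd : t * d = x - c := div_mul_cancel₀ _ hd.ne'
  refine ⟨⌊t⌋ + 1, ?_, ?_⟩
  · have : t < ⌊t⌋ + 1 := Int.lt_floor_add_one t
    push_cast
    nlinarith
  · have : (⌊t⌋ : ℝ) ≤ t := Int.floor_le t
    push_cast
    nlinarith

lemma not_dvd_or_not_dvd_add {R : Type*} [Ring R] {p m : R} (hm : ¬ p ∣ m) (c : R) :
    ¬ p ∣ c ∨ ¬ p ∣ c + m := by
  by_contra! h
  exact hm ((dvd_add_right h.1).mp h.2)

lemma isCoprime_one_add_mul_pow_mul {R : Type*} [CommRing R] [IsBezout R] [IsDomain R]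
    {p : R} (hp : Prime p) {k m : R} (hk : ¬ p ∣ 1 + k * m) (v : ℕ) :
    IsCoprime (1 + k * m) (p ^ v * m) :=
  ((hp.coprime_iff_not_dvd.mpr hk).symm.pow_right).mul_right
    (isCoprime_one_left.add_mul_right_left k)

lemma lt_pow_of_sInf_le {x c : ℝ} (hx : 1 < x) {n : ℕ} (hn : sInf {n : ℕ | c < x ^ n} ≤ n) :
    c < x ^ n := by
  obtain ⟨n₀, hn₀⟩ := pow_unbounded_of_one_lt c hx
  exact (Nat.sInf_mem (s := {n : ℕ | c < x ^ n}) ⟨n₀, hn₀⟩).trans_le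
    (pow_le_pow_right₀ hx.le hn)

lemma exists_coprime_div_mem_Ioo_of_two_lt_ordProj_mul {p r : ℕ} (hp : p.Prime) (hr : r ≠ 0)
    {a b : ℝ} (h : 2 < (ordProj[p] r : ℕ) * (b - a)) :
    ∃ q : ℤ, Int.gcd q r = 1 ∧ a < q / r ∧ q / r < b := by
  set m := ordCompl[p] r
  have hm : ¬ (p : ℤ) ∣ m := by exact_mod_cast Nat.not_dvd_ordCompl hp hr
  have hm0 : (0 : ℝ) < m := by exact_mod_cast Nat.ordCompl_pos p hr
  have hr0 : (0 : ℝ) < r := by exact_mod_cast Nat.pos_of_ne_zero hr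
  have hrZ : (r : ℤ) = (p : ℤ) ^ r.factorization p * m := by
    exact_mod_cast (Nat.ordProj_mul_ordCompl_eq_self r p).symm
  have hrR : (r : ℝ) = (ordProj[p] r : ℕ) * m := by
    exact_mod_cast (Nat.ordProj_mul_ordCompl_eq_self r p).symm
  suffices ∃ q : ℤ, IsCoprime q r ∧ r * a < q ∧ q < r * b by
    obtain ⟨q, hq, hqa, hqb⟩ := this
    exact ⟨q, Int.isCoprime_iff_gcd_eq_one.mp hq, (lt_div_iff₀ hr0).mpr (by linarith),
      (div_lt_iff₀ hr0).mpr (by linarith)⟩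
  have hlen : r * a + 2 * m < r * b := by nlinarith
  obtain ⟨j, hja, hjb⟩ := exists_add_mul_mem_Ioo_of_add_two_mul_lt 1 hm0 hlen
  have hmono : (1 : ℝ) + j * m < 1 + (j + 1) * m := by nlinarith
  rw [hrZ]
  rcases not_dvd_or_not_dvd_add hm (1 + j * m) with hq | hq
  · exact ⟨1 + j * m, isCoprime_one_add_mul_pow_mul (Nat.prime_iff_prime_int.mp hp) hq _,
      by push_cast; linarith, by push_cast; linarith⟩
  · rw [show 1 + j * (m : ℤ) + m = 1 + (j + 1) * m by ring] at hq
    exact ⟨1 + (j + 1) * m, isCoprime_one_add_mul_pow_mul (Nat.prime_iff_prime_int.mp hp) hq _,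
      by push_cast; linarith, by push_cast; linarith⟩

/-- Theorem on denominators of irreducible fractions in an interval `(a,b)`:
any positive natural number `r` not of the form `p₁^{t₁}···p_m^{t_m}` — where
`p₁,…,p_m` are the primes `≤ max(3/(b-a), 2)` and `0 ≤ tᵢ ≤ sᵢ - 1` with `sᵢ`
minimal such that `pᵢ^{sᵢ} > 4/(b-a)` — is the denominator of an irreducible
fraction `q/r ∈ (a,b)`. Membership of `r` in the excluded set is expressed via
the prime factorization of `r`. -/
theorem irreducible_fraction_all_large_denominators (a b : ℝ) (hab : a < b)
    (s : ℕ → ℕ) (hs : ∀ p : ℕ, s p = sInf {n : ℕ | 4 / (b - a) < (p : ℝ) ^ n})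
    (r : ℕ) (hr : 0 < r)
    (hform : ¬ ∀ p ∈ r.primeFactors,
        (p : ℝ) ≤ max (3 / (b - a)) 2 ∧ r.factorization p ≤ s p - 1) :
    ∃ q : ℤ, Int.gcd q (r : ℤ) = 1 ∧ a < (q : ℝ) / (r : ℝ) ∧ (q : ℝ) / (r : ℝ) < b := by
  have hba : 0 < b - a := sub_pos.mpr hab
  push Not at hform
  obtain ⟨p, hp_mem, hp_large⟩ := hform
  have hp := Nat.prime_of_mem_primeFactors hp_mem
  refine exists_coprime_div_mem_Ioo_of_two_lt_ordProj_mul hp hr.ne' ?_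
  by_cases hsmall : (p : ℝ) ≤ max (3 / (b - a)) 2
  · have hs_le : s p ≤ r.factorization p := by have := hp_large hsmall; omega
    have h4 : 4 / (b - a) < (ordProj[p] r : ℕ) := by
      push_cast
      exact lt_pow_of_sInf_le (by exact_mod_cast hp.one_lt) (hs p ▸ hs_le)
    rw [div_lt_iff₀ hba] at h4
    linarith
  · have h3 : 3 < (p : ℝ) * (b - a) :=
      (div_lt_iff₀ hba).mp ((le_max_left _ _).trans_lt (not_le.mp hsmall))
    have hv : r.factorization p ≠ 0 :=
      Finsupp.mem_support_iff.mp (r.support_factorization ▸ hp_mem)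
    have hpP : (p : ℝ) ≤ (ordProj[p] r : ℕ) := by exact_mod_cast Nat.le_self_pow hv p
    nlinarith
end

section
/- With the notation of the previous theorem, set P = p₁^{s₁−1}···p_m^{s_m−1}. Then for every natural number r > P there exists an integer q with gcd(q,r) = 1 and a < q/r < b. -/
/-!
Write `ε = b - a`. If every prime power `p^{v_p(r)}` exactly dividing `r` were at most `2/ε`,
then every prime factor of `r` would be at most `2/ε`, with exponent below `sₚ`
(as `p^{sₚ} > 4/ε`), so `r ∣ P`, which `r > P` forbids. Hence `r = p^e m` with `p ∤ m` and
`p^e ε > 2`, so the interval `(ra, rb)` has length `> 2m` and contains two consecutive terms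
`q, q + m` of the progression `1 + mℤ`. Both are coprime to `m`, and as `p ∤ m` one of them is
prime to `p`; that one is the numerator.
-/

theorem lt_pow_sInf_setOf_lt_pow {R : Type*} [Semiring R] [LinearOrder R] [IsStrictOrderedRing R]
    [Archimedean R] [ExistsAddOfLE R] (c : R) {x : R} (hx : 1 < x) :
    c < x ^ sInf {n : ℕ | c < x ^ n} :=
  Nat.sInf_mem (pow_unbounded_of_one_lt c hx)

theorem Nat.dvd_prod_pow_sub_one_of_ordProj_le {r : ℕ} (hr : r ≠ 0) {C : ℝ} {S : Finset ℕ}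
    {s : ℕ → ℕ} (hC : ∀ p ∈ r.primeFactors, (p : ℝ) ^ r.factorization p ≤ C)
    (hS : ∀ p : ℕ, p.Prime → (p : ℝ) ≤ C → p ∈ S)
    (hs : ∀ p ∈ r.primeFactors, C < (p : ℝ) ^ s p) :
    r ∣ ∏ p ∈ S, p ^ (s p - 1) := by
  have hmem : ∀ p ∈ r.primeFactors, p ∈ S ∧ r.factorization p < s p := by
    intro p hp
    have hpp := Nat.prime_of_mem_primeFactors hp
    have hp1 : (1 : ℝ) < p := by exact_mod_cast hpp.one_lt
    have hv : r.factorization p ≠ 0 :=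
      (hpp.factorization_pos_of_dvd hr (Nat.dvd_of_mem_primeFactors hp)).ne'
    exact ⟨hS p hpp ((le_self_pow₀ hp1.le hv).trans (hC p hp)),
      (pow_lt_pow_iff_right₀ hp1).mp ((hC p hp).trans_lt (hs p hp))⟩
  calc r = ∏ p ∈ r.primeFactors, p ^ r.factorization p :=
        Nat.prod_primeFactors_pow_factorization hr
    _ ∣ ∏ p ∈ r.primeFactors, p ^ (s p - 1) :=
      Finset.prod_dvd_prod_of_dvd _ _ fun p hp ↦
        pow_dvd_pow p (Nat.le_sub_one_of_lt (hmem p hp).2)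
    _ ∣ ∏ p ∈ S, p ^ (s p - 1) := Finset.prod_dvd_prod_of_subset _ _ _ fun p hp ↦ (hmem p hp).1

theorem Nat.exists_prime_pow_mul_eq_of_not_dvd_prod {r : ℕ} (hr : r ≠ 0) {C : ℝ}
    {S : Finset ℕ} {s : ℕ → ℕ} (hS : ∀ p : ℕ, p.Prime → (p : ℝ) ≤ C → p ∈ S)
    (hs : ∀ p : ℕ, p.Prime → C < (p : ℝ) ^ s p) (hrS : ¬ r ∣ ∏ p ∈ S, p ^ (s p - 1)) :
    ∃ p e m : ℕ, p.Prime ∧ ¬ p ∣ m ∧ r = p ^ e * m ∧ C < (p : ℝ) ^ e := by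
  obtain ⟨p, hp, hpr⟩ : ∃ p ∈ r.primeFactors, C < (p : ℝ) ^ r.factorization p := by
    by_contra! hsmall
    exact hrS (Nat.dvd_prod_pow_sub_one_of_ordProj_le hr hsmall hS
      fun p hp ↦ hs p (Nat.prime_of_mem_primeFactors hp))
  have hpp := Nat.prime_of_mem_primeFactors hp
  exact ⟨p, _, _, hpp, Nat.not_dvd_ordCompl hpp hr,
    (Nat.ordProj_mul_ordCompl_eq_self r p).symm, hpr⟩

theorem Int.exists_modEq_mem_Ioc {K : Type*} [Field K] [LinearOrder K] [IsStrictOrderedRing K]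
    [FloorRing K] (c : ℤ) {m : ℤ} (hm : 0 < m) (x : K) :
    ∃ q : ℤ, q ≡ c [ZMOD m] ∧ x < q ∧ (q : K) ≤ x + m := by
  have hm' : (0 : K) < m := by exact_mod_cast hm
  set t := ⌊(x - c) / m⌋
  refine ⟨c + m * (t + 1), ?_, ?_, ?_⟩
  · exact Int.modEq_add_fac_self
  · have := (div_lt_iff₀ hm').mp (Int.lt_floor_add_one ((x - c) / m))
    push_cast
    linarith
  · have := (le_div_iff₀ hm').mp (Int.floor_le ((x - c) / m))
    push_cast
    linarith

theorem Int.isCoprime_pow_mul_of_modEq_one {p q m : ℤ} (hp : Prime p) (e : ℕ) (hpq : ¬ p ∣ q)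
    (hqm : q ≡ 1 [ZMOD m]) : IsCoprime q (p ^ e * m) := by
  refine IsCoprime.mul_right ((hp.coprime_iff_not_dvd.mpr hpq).symm.pow_right) ?_
  obtain ⟨t, ht⟩ := (Int.modEq_iff_dvd.mp hqm.symm)
  rw [show q = 1 + m * t by linarith]
  exact isCoprime_one_left.add_mul_left_left t

theorem Int.exists_isCoprime_pow_mul_mem_Ioo {K : Type*} [Field K] [LinearOrder K]
    [IsStrictOrderedRing K] [FloorRing K] {p m : ℤ} (hp : Prime p) (e : ℕ) (hm : 0 < m)
    (hpm : ¬ p ∣ m) {x y : K} (hxy : x + 2 * m < y) :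
    ∃ q : ℤ, IsCoprime q (p ^ e * m) ∧ x < q ∧ (q : K) < y := by
  obtain ⟨q, hq1, hxq, hqx⟩ := Int.exists_modEq_mem_Ioc 1 hm x
  by_cases hpq : p ∣ q
  · refine ⟨q + m, Int.isCoprime_pow_mul_of_modEq_one hp e ?_ ?_, ?_, ?_⟩
    · exact fun h ↦ hpm ((Int.dvd_add_right hpq).mp h)
    · exact (Int.add_modulus_modEq_iff).mpr hq1
    · push_cast
      linarith [(by exact_mod_cast hm : (0 : K) < m)]
    · push_cast
      linarith
  · exact ⟨q, Int.isCoprime_pow_mul_of_modEq_one hp e hpq hq1, hxq, by linarith⟩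

theorem Int.exists_isCoprime_div_mem_Ioo {K : Type*} [Field K] [LinearOrder K]
    [IsStrictOrderedRing K] [FloorRing K] {p m : ℤ} (hp : Prime p) {e : ℕ} (hm : 0 < m)
    (hpm : ¬ p ∣ m) {a b : K} (hab : a < b) (hpe : 2 < (b - a) * p ^ e) :
    ∃ q : ℤ, IsCoprime q (p ^ e * m) ∧ a < q / ((p ^ e * m : ℤ) : K) ∧
      q / ((p ^ e * m : ℤ) : K) < b := by
  have hm' : (0 : K) < m := by exact_mod_cast hm
  have hd : (0 : K) < p ^ e := pos_of_mul_pos_right (two_pos.trans hpe) (sub_pos.mpr hab).le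
  have hr : (0 : K) < ((p ^ e * m : ℤ) : K) := by push_cast; positivity
  obtain ⟨q, hcop, hlo, hhi⟩ := Int.exists_isCoprime_pow_mul_mem_Ioo hp e hm hpm
    (x := ((p ^ e * m : ℤ) : K) * a) (y := ((p ^ e * m : ℤ) : K) * b) (by push_cast; nlinarith)
  refine ⟨q, hcop, ?_, ?_⟩
  · rwa [lt_div_iff₀ hr, mul_comm]
  · rwa [div_lt_iff₀ hr, mul_comm]

/-- With `P = ∏ pᵢ^{sᵢ-1}`, the product being over the primes
`pᵢ ≤ max(3/(b-a), 2)` and `sᵢ` minimal with `pᵢ^{sᵢ} > 4/(b-a)`, every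
natural number `r > P` is the denominator of an irreducible fraction
`q/r ∈ (a,b)`. -/
theorem irreducible_fraction_denominator_gt_P (a b : ℝ) (hab : a < b)
    (s : ℕ → ℕ) (hs : ∀ p : ℕ, s p = sInf {n : ℕ | 4 / (b - a) < (p : ℝ) ^ n})
    (P : ℕ)
    (hP : P = ∏ p ∈ (Finset.range (⌊max (3 / (b - a)) 2⌋₊ + 1)).filter Nat.Prime,
        p ^ (s p - 1))
    (r : ℕ) (hr : P < r) :
    ∃ q : ℤ, Int.gcd q (r : ℤ) = 1 ∧ a < (q : ℝ) / (r : ℝ) ∧ (q : ℝ) / (r : ℝ) < b := by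
  have hε : 0 < b - a := sub_pos.mpr hab
  have hr0 : r ≠ 0 := by omega
  have hS : ∀ p : ℕ, p.Prime → (p : ℝ) ≤ 2 / (b - a) →
      p ∈ (Finset.range (⌊max (3 / (b - a)) 2⌋₊ + 1)).filter Nat.Prime := fun p hpp hp ↦
    Finset.mem_filter.mpr ⟨Finset.mem_range_succ_iff.mpr (Nat.le_floor (hp.trans
      ((div_le_div_of_nonneg_right (by norm_num) hε.le).trans (le_max_left _ _)))), hpp⟩
  have hs' : ∀ p : ℕ, p.Prime → 2 / (b - a) < (p : ℝ) ^ s p := fun p hpp ↦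
    hs p ▸ (div_lt_div_of_pos_right (by norm_num) hε).trans
      (lt_pow_sInf_setOf_lt_pow _ (by exact_mod_cast hpp.one_lt))
  have hP0 : 0 < P := hP ▸ Finset.prod_pos fun p hp ↦ pow_pos (Finset.mem_filter.mp hp).2.pos _
  obtain ⟨p, e, m, hpp, hpm, rfl, hpe⟩ :=
    Nat.exists_prime_pow_mul_eq_of_not_dvd_prod hr0 hS hs' (hP ▸ Nat.not_dvd_of_pos_of_lt hP0 hr)
  obtain ⟨q, hcop, hq⟩ := Int.exists_isCoprime_div_mem_Ioo (Nat.prime_iff_prime_int.mp hpp)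
    (by exact_mod_cast Nat.pos_of_ne_zero (right_ne_zero_of_mul hr0))
    (Int.natCast_dvd_natCast.not.mpr hpm) hab
    (by exact_mod_cast (div_lt_iff₀' hε).mp hpe)
  exact ⟨q, Int.isCoprime_iff_gcd_eq_one.mp (by exact_mod_cast hcop), by exact_mod_cast hq⟩
end

section
/- The vector field X on O⁺ defined by X₁ = (x+1)(1+y+z)(yz−x−y−a)/(yz), X₂ = (y+1)(z−x)(a+x+y+z+xz)/(xz), X₃ = (z+1)(1+x+y)(a+y+z−xy)/(xy) satisfies the compatibility condition X(F(q)) = (DF)_q X(q) for all q ∈ O⁺, where F(x,y,z) = (y, z, (a+y+z)/x). -/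
/-!
Along the Lyness map `F(x,y,z) = (y, z, (a+y+z)/x)` the differential is
`(DF)_q v = (v₂, v₃, (v₂ + v₃)/x - (a+y+z) v₁/x²)`, so the compatibility condition
`X(F q) = (DF)_q X(q)` amounts to three identities between rational functions of `x, y, z`;
they become polynomial identities once the denominators `x`, `y`, `z` and `a + y + z` (all
nonzero on the positive octant) are cleared.
-/

noncomputable def lynessMap (a : ℝ) (p : ℝ × ℝ × ℝ) : ℝ × ℝ × ℝ :=
  (p.2.1, p.2.2, (a + p.2.1 + p.2.2) / p.1)

noncomputable def lynessField (a : ℝ) (p : ℝ × ℝ × ℝ) : ℝ × ℝ × ℝ :=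
  ((p.1 + 1) * (1 + p.2.1 + p.2.2) * (p.2.1 * p.2.2 - p.1 - p.2.1 - a) / (p.2.1 * p.2.2),
   (p.2.1 + 1) * (p.2.2 - p.1) * (a + p.1 + p.2.1 + p.2.2 + p.1 * p.2.2) / (p.1 * p.2.2),
   (p.2.2 + 1) * (1 + p.1 + p.2.1) * (a + p.2.1 + p.2.2 - p.1 * p.2.1) / (p.1 * p.2.1))

theorem fderiv_lynessMap_apply (a : ℝ) {q : ℝ × ℝ × ℝ} (hq : q.1 ≠ 0) (v : ℝ × ℝ × ℝ) :
    fderiv ℝ (lynessMap a) q v =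
      (v.2.1, v.2.2, (v.2.1 + v.2.2) / q.1 - (a + q.2.1 + q.2.2) * v.1 / q.1 ^ 2) := by
  have hy := (hasFDerivAt_fst (𝕜 := ℝ) (p := q.2)).comp q hasFDerivAt_snd
  have hz := (hasFDerivAt_snd (𝕜 := ℝ) (p := q.2)).comp q hasFDerivAt_snd
  have hinv := (hasDerivAt_inv hq).comp_hasFDerivAt q (hasFDerivAt_fst (𝕜 := ℝ) (p := q))
  have hF : HasFDerivAt (lynessMap a) _ q :=
    hy.prodMk (hz.prodMk ((((hasFDerivAt_const a q).add hy).add hz).mul hinv))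
  rw [hF.fderiv]
  simp only [Pi.add_apply, Function.comp_apply, neg_smul, smul_neg, zero_add, smul_add,
    ContinuousLinearMap.prod_apply, ContinuousLinearMap.comp_apply, ContinuousLinearMap.coe_snd',
    ContinuousLinearMap.coe_fst', add_apply, neg_apply, smul_apply, smul_eq_mul, Prod.mk.injEq,
    true_and]
  field_simp
  ring

theorem lynessField_lynessMap (a : ℝ) {q : ℝ × ℝ × ℝ} (hx : q.1 ≠ 0) (hy : q.2.1 ≠ 0)
    (hz : q.2.2 ≠ 0) (hw : a + q.2.1 + q.2.2 ≠ 0) :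
    lynessField a (lynessMap a q) =
      ((lynessField a q).2.1, (lynessField a q).2.2,
        ((lynessField a q).2.1 + (lynessField a q).2.2) / q.1
          - (a + q.2.1 + q.2.2) * (lynessField a q).1 / q.1 ^ 2) := by
  simp only [lynessField, lynessMap, Prod.mk.injEq]
  refine ⟨?_, ?_, ?_⟩ <;> field_simp <;> ring

/-- The vector field `X` with components
`X₁ = (x+1)(1+y+z)(yz−x−y−a)/(yz)`, `X₂ = (y+1)(z−x)(a+x+y+z+xz)/(xz)`,
`X₃ = (z+1)(1+x+y)(a+y+z−xy)/(xy)` satisfies the compatibility condition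
`X(F(q)) = (DF)_q X(q)` on the positive octant, where
`F(x,y,z) = (y, z, (a+y+z)/x)`. -/
theorem lyness_vector_field_compatibility (a : ℝ) (ha : 0 < a) :
    let F : ℝ × ℝ × ℝ → ℝ × ℝ × ℝ := fun p => (p.2.1, p.2.2, (a + p.2.1 + p.2.2) / p.1)
    let X : ℝ × ℝ × ℝ → ℝ × ℝ × ℝ := fun p =>
      ((p.1 + 1) * (1 + p.2.1 + p.2.2) * (p.2.1 * p.2.2 - p.1 - p.2.1 - a) / (p.2.1 * p.2.2),
       (p.2.1 + 1) * (p.2.2 - p.1) * (a + p.1 + p.2.1 + p.2.2 + p.1 * p.2.2) / (p.1 * p.2.2),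
       (p.2.2 + 1) * (1 + p.1 + p.2.1) * (a + p.2.1 + p.2.2 - p.1 * p.2.1) / (p.1 * p.2.1))
    ∀ q : ℝ × ℝ × ℝ, 0 < q.1 → 0 < q.2.1 → 0 < q.2.2 →
      X (F q) = fderiv ℝ F q (X q) := by
  intro F X q hx hy hz
  change lynessField a (lynessMap a q) = fderiv ℝ (lynessMap a) q (lynessField a q)
  rw [fderiv_lynessMap_apply a hx.ne', lynessField_lynessMap a hx.ne' hy.ne' hz.ne' (by positivity)]
end

section
/- The singular points of the vector field X inside O⁺ are exactly the points of the curve L = {(x, (x+a)/(x-1), x) : x > 1}; that is, X(x,y,z) = 0 with x,y,z > 0 if and only if z = x, y = (x+a)/(x−1), x > 1. -/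
/-- The singular points of the vector field `X` in the positive octant are
exactly the points of the curve `L = {(x, (x+a)/(x-1), x) : x > 1}`. -/
theorem lyness_vector_field_singular_points (a : ℝ) (ha : 0 < a) :
    let X : ℝ × ℝ × ℝ → ℝ × ℝ × ℝ := fun p =>
      ((p.1 + 1) * (1 + p.2.1 + p.2.2) * (p.2.1 * p.2.2 - p.1 - p.2.1 - a) / (p.2.1 * p.2.2),
       (p.2.1 + 1) * (p.2.2 - p.1) * (a + p.1 + p.2.1 + p.2.2 + p.1 * p.2.2) / (p.1 * p.2.2),
       (p.2.2 + 1) * (1 + p.1 + p.2.1) * (a + p.2.1 + p.2.2 - p.1 * p.2.1) / (p.1 * p.2.1))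
    ∀ q : ℝ × ℝ × ℝ, 0 < q.1 → 0 < q.2.1 → 0 < q.2.2 →
      (X q = 0 ↔ 1 < q.1 ∧ q.2.2 = q.1 ∧ q.2.1 = (q.1 + a) / (q.1 - 1)) := by
  intro X q hx hy hz
  obtain ⟨x, y, z⟩ := q
  simp only [X, Prod.mk_eq_zero] at *
  have hyz : y * z ≠ 0 := by positivity
  have hxz : x * z ≠ 0 := by positivity
  have hxy : x * y ≠ 0 := by positivity
  constructor
  · rintro ⟨h1, h2, h3⟩
    rw [div_eq_zero_iff] at h1 h2 h3
    have n1 : y * z - x - y - a = 0 := by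
      rcases h1 with h1 | h1
      · rcases mul_eq_zero.1 h1 with h | h
        · rcases mul_eq_zero.1 h with h | h <;> nlinarith
        · exact h
      · exact absurd h1 hyz
    have n2 : z = x := by
      rcases h2 with h2 | h2
      · rcases mul_eq_zero.1 h2 with h | h
        · rcases mul_eq_zero.1 h with h | h
          · nlinarith
          · linarith
        · nlinarith
      · exact absurd h2 hxz
    rw [n2] at n1
    have hx1 : 1 < x := by
      by_contra hle
      push_neg at hle
      nlinarith
    refine ⟨hx1, n2, ?_⟩
    have hne : x - 1 ≠ 0 := by linarith
    field_simp
    nlinarith [n1]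
  · rintro ⟨hx1, hzx, hyv⟩
    have hne : x - 1 ≠ 0 := by linarith
    have key : y * x - x - y - a = 0 := by
      rw [hyv]; field_simp; ring
    rw [hzx]
    refine ⟨?_, ?_, ?_⟩
    · rw [div_eq_zero_iff]; left
      linear_combination ((x + 1) * (1 + y + x)) * key
    · rw [div_eq_zero_iff]; left
      ring
    · rw [div_eq_zero_iff]; left
      linear_combination (-(x + 1) * (1 + x + y)) * key
end
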